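/- Let ℓ and ℓ' be labels with anchors p and p' = p + (d,0), d > 0, and let r(α) denote the rotated right side of ℓ(α) and l'(α) the rotated left side of ℓ'(α) (closed segments). If r(α) ∩ l'(α) ≠ ∅, then d · cos α = w_r + w'_l; in particular d ≥ w_r + w'_l and α modulo 2π lies in {arccos((w_r+w'_l)/d), 2π − arccos((w_r+w'_l)/d)}. -/

import Mathlib

/-
Rotating both labels about their own anchors by the same angle rigidly moves the offset between
the two rotated sides: a common point `p + R(a - p) = p' + R(b - p')` gives
`(a - p) - (b - p') = R(-α)(p' - p)`. With `p' - p = (d, 0)`, the first coordinates read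
`w_r + w'_l = d cos α`, and the cosine pins `α` down modulo `2π` to `± arccos`.
-/

open Real Set

/-- Rotation of the plane about the origin by angle `α` (counterclockwise). -/
noncomputable def rot (α : ℝ) (v : ℝ × ℝ) : ℝ × ℝ :=
  (v.1 * Real.cos α - v.2 * Real.sin α, v.1 * Real.sin α + v.2 * Real.cos α)

/-- The image of a set under rotation by `α` about the point `p`. -/
noncomputable def rotAbout (p : ℝ × ℝ) (α : ℝ) (s : Set (ℝ × ℝ)) : Set (ℝ × ℝ) :=
  (fun x => p + rot α (x - p)) '' s

/-- The right side of the label anchored at `p` (at rotation 0). -/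
noncomputable def rightSide (p : ℝ × ℝ) (wr hb ht : ℝ) : Set (ℝ × ℝ) :=
  Set.Icc (p.1 + wr, p.2 - hb) (p.1 + wr, p.2 + ht)

/-- The left side of the label anchored at `p` (at rotation 0). -/
noncomputable def leftSide (p : ℝ × ℝ) (wl hb ht : ℝ) : Set (ℝ × ℝ) :=
  Set.Icc (p.1 - wl, p.2 - hb) (p.1 - wl, p.2 + ht)

lemma rot_sub (α : ℝ) (u v : ℝ × ℝ) : rot α (u - v) = rot α u - rot α v := by
  ext <;> simp only [rot, Prod.fst_sub, Prod.snd_sub] <;> ring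

lemma rot_neg_rot (α : ℝ) (v : ℝ × ℝ) : rot (-α) (rot α v) = v := by
  ext <;> simp only [rot, cos_neg, sin_neg]
  · linear_combination v.1 * sin_sq_add_cos_sq α
  · linear_combination v.2 * sin_sq_add_cos_sq α

lemma fst_rot_neg_horizontal (α d : ℝ) : (rot (-α) (d, 0)).1 = d * cos α := by
  simp [rot]

lemma sub_sub_eq_rot_neg_of_rotAbout_eq {p q a b : ℝ × ℝ} {α : ℝ}
    (h : p + rot α (a - p) = q + rot α (b - q)) :
    (a - p) - (b - q) = rot (-α) (q - p) := by
  have hrot : rot α ((a - p) - (b - q)) = q - p := by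
    rw [rot_sub]
    linear_combination (norm := abel_nf) h
  rw [← hrot, rot_neg_rot]

lemma fst_of_mem_rightSide {p x : ℝ × ℝ} {wr hb ht : ℝ} (hx : x ∈ rightSide p wr hb ht) :
    x.1 = p.1 + wr :=
  le_antisymm hx.2.1 hx.1.1

lemma fst_of_mem_leftSide {p x : ℝ × ℝ} {wl hb ht : ℝ} (hx : x ∈ leftSide p wl hb ht) :
    x.1 = p.1 - wl :=
  le_antisymm hx.2.1 hx.1.1

lemma mul_cos_eq_of_rotAbout_rightSide_inter_leftSide_nonempty {p : ℝ × ℝ} {d α : ℝ}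
    {wr hb ht wl' hb' ht' : ℝ}
    (hmeet : (rotAbout p α (rightSide p wr hb ht) ∩
        rotAbout (p + (d, 0)) α (leftSide (p + (d, 0)) wl' hb' ht')).Nonempty) :
    d * cos α = wr + wl' := by
  obtain ⟨x, ⟨a, ha, rfl⟩, ⟨b, hb, hbx⟩⟩ := hmeet
  have hoffset := congrArg Prod.fst (sub_sub_eq_rot_neg_of_rotAbout_eq hbx.symm)
  simp only [add_sub_cancel_left, fst_rot_neg_horizontal, Prod.fst_sub,
    fst_of_mem_rightSide ha, fst_of_mem_leftSide hb, Prod.fst_add] at hoffset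
  linarith

lemma coe_eq_arccos_or_two_pi_sub_arccos_of_cos_eq {α c : ℝ} (h : cos α = c) :
    (α : Real.Angle) = (arccos c : Real.Angle) ∨
      (α : Real.Angle) = ((2 * π - arccos c : ℝ) : Real.Angle) := by
  have hcos : Real.Angle.cos α = Real.Angle.cos (arccos c) := by
    rw [Real.Angle.cos_coe, Real.Angle.cos_coe,
      cos_arccos (h ▸ neg_one_le_cos α) (h ▸ cos_le_one α), h]
  refine (Real.Angle.cos_eq_iff_eq_or_eq_neg.mp hcos).imp id fun hneg => ?_
  rw [hneg, Real.Angle.coe_sub, Real.Angle.coe_two_pi, zero_sub]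

theorem right_left_conflict_event_general
    (p : ℝ × ℝ) (d : ℝ) (hd : 0 < d)
    (wr hb ht wl' hb' ht' : ℝ)
    (α : ℝ)
    (hmeet : (rotAbout p α (rightSide p wr hb ht) ∩
        rotAbout (p + (d, 0)) α (leftSide (p + (d, 0)) wl' hb' ht')).Nonempty) :
    d * Real.cos α = wr + wl' ∧ wr + wl' ≤ d ∧
      ((α : Real.Angle) = ((Real.arccos ((wr + wl') / d) : ℝ) : Real.Angle) ∨
       (α : Real.Angle) = ((2 * π - Real.arccos ((wr + wl') / d) : ℝ) : Real.Angle)) := by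
  have hdcos := mul_cos_eq_of_rotAbout_rightSide_inter_leftSide_nonempty hmeet
  have hcos : cos α = (wr + wl') / d := by
    rw [← hdcos, mul_div_cancel_left₀ _ hd.ne']
  exact ⟨hdcos, hdcos ▸ mul_le_of_le_one_right hd.le (cos_le_one α),
    coe_eq_arccos_or_two_pi_sub_arccos_of_cos_eq hcos⟩

/-- If the rotated right side `r(α)` of `ℓ` meets the rotated left side `l'(α)` of `ℓ'`
(anchors at distance `d` on a horizontal line), then `d·cos α = w_r + w'_l`;
in particular `d ≥ w_r + w'_l` and `α` modulo `2π` lies in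
`{arccos((w_r+w'_l)/d), 2π − arccos((w_r+w'_l)/d)}`. -/
theorem right_left_conflict_event
    (p : ℝ × ℝ) (d : ℝ) (hd : 0 < d)
    (wl wr hb ht wl' wr' hb' ht' : ℝ)
    (hwl : 0 ≤ wl) (hwr : 0 ≤ wr) (hhb : 0 ≤ hb) (hht : 0 ≤ ht)
    (hwl' : 0 ≤ wl') (hwr' : 0 ≤ wr') (hhb' : 0 ≤ hb') (hht' : 0 ≤ ht')
    (hw : 0 < wl + wr) (hh : 0 < hb + ht) (hw' : 0 < wl' + wr') (hh' : 0 < hb' + ht')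
    (α : ℝ)
    (hmeet : (rotAbout p α (rightSide p wr hb ht) ∩
        rotAbout (p + (d, 0)) α (leftSide (p + (d, 0)) wl' hb' ht')).Nonempty) :
    d * Real.cos α = wr + wl' ∧ wr + wl' ≤ d ∧
      ((α : Real.Angle) = ((Real.arccos ((wr + wl') / d) : ℝ) : Real.Angle) ∨
       (α : Real.Angle) = ((2 * π - Real.arccos ((wr + wl') / d) : ℝ) : Real.Angle)) :=
  right_left_conflict_event_general p d hd wr hb ht wl' hb' ht' α hmeet
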